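/- arXiv:2511.10449 — 2 statements merged into one kernel-verified Lean document; each statement's English description precedes it below -/
import Mathlib

section
/- Let A be a finite set of atoms and T a theory of S4F standpoint logic consisting of formulas only (no sharpening statements). An S5 standpoint structure F is a minimal model of T if and only if the theory of F, Th(F) := {ψ : ψ a formula and F ⊩ ψ}, is an expansion of T. -/
/-- Formulas of S4F standpoint logic over atoms `A` and standpoint names `S`. -/
inductive SForm (A S : Type) : Type
  | atom : A → SForm A S
  | neg  : SForm A S → SForm A S
  | and  : SForm A S → SForm A S → SForm A S
  | box  : S → SForm A S → SForm A S

/-- Expressions: formulas or sharpening statements `s ≼ u`. -/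
inductive SExpr (A S : Type) : Type
  | form  : SForm A S → SExpr A S
  | sharp : S → S → SExpr A S

/-- S4F standpoint structures over a carrier type `P` of precisifications. -/
structure SFFS (A S P : Type) (star : S) where
  Pi : Set P
  sig : S → Set P
  tau : S → Set P
  val : P → Set A
  nonempty_Pi : Pi.Nonempty
  sig_sub : ∀ s, sig s ⊆ Pi
  tau_sub : ∀ s, tau s ⊆ Pi
  star_union : sig star ∪ tau star = Pi
  sig_nonempty : ∀ s, (sig s).Nonempty
  sig_tau_disj : ∀ s u, sig s ∩ tau u = ∅

/-- Pointed satisfaction `F, π ⊩ φ` for formulas. -/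
def SFFS.sat {A S P : Type} {star : S} (F : SFFS A S P star) : SForm A S → P → Prop
  | SForm.atom p, π => p ∈ F.val π
  | SForm.neg φ, π => ¬ F.sat φ π
  | SForm.and φ ψ, π => F.sat φ π ∧ F.sat ψ π
  | SForm.box s φ, π =>
      (π ∈ F.sig star → ∀ π' ∈ F.sig s, F.sat φ π') ∧
      (π ∈ F.tau star → ∀ π' ∈ F.sig s ∪ F.tau s, F.sat φ π')

/-- Pointed satisfaction for expressions. -/
def SFFS.satE {A S P : Type} {star : S} (F : SFFS A S P star) (e : SExpr A S) (π : P) : Prop :=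
  match e with
  | SExpr.form φ => F.sat φ π
  | SExpr.sharp s u => F.sig s ⊆ F.sig u ∧ F.tau s ⊆ F.tau u

/-- Global satisfaction `F ⊩ φ` of a formula. -/
def SFFS.models {A S P : Type} {star : S} (F : SFFS A S P star) (φ : SForm A S) : Prop :=
  ∀ π ∈ F.Pi, F.sat φ π

/-- Global satisfaction of an expression. -/
def SFFS.modelsE {A S P : Type} {star : S} (F : SFFS A S P star) (e : SExpr A S) : Prop :=
  ∀ π ∈ F.Pi, F.satE e π

/-- `F` is a model of a theory (set of expressions) `T`. -/
def SFFS.isModel {A S P : Type} {star : S} (F : SFFS A S P star) (T : Set (SExpr A S)) : Prop :=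
  ∀ e ∈ T, F.modelsE e

/-- `F` is a model of a set of formulas `T`. -/
def SFFS.isModelF {A S P : Type} {star : S} (F : SFFS A S P star) (T : Set (SForm A S)) : Prop :=
  ∀ φ ∈ T, F.models φ

/-- S5 standpoint structures: all outer sets empty. -/
def SFFS.IsS5 {A S P : Type} {star : S} (F : SFFS A S P star) : Prop :=
  ∀ s, F.tau s = ∅

/-- Determination preorder `F1 ⊴_s F2`, per standpoint. -/
def prefS {A S P1 P2 : Type} {star : S} (F1 : SFFS A S P1 star) (F2 : SFFS A S P2 star)
    (s : S) : Prop :=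
  F2.val '' F2.sig s = F1.val '' F1.sig s ∧
  F2.val '' F2.tau s ⊆ F1.val '' (F1.sig s ∪ F1.tau s)

/-- Determination preorder `F1 ⊴ F2`. -/
def pref {A S P1 P2 : Type} {star : S} (F1 : SFFS A S P1 star) (F2 : SFFS A S P2 star) : Prop :=
  ∀ s, prefS F1 F2 s

/-- Entailment `T ⊨ e`: every model of `T` satisfies `e`. -/
def Entails {A S : Type} (star : S) (T : Set (SExpr A S)) (e : SExpr A S) : Prop :=
  ∀ (P : Type) (F : SFFS A S P star), F.isModel T → F.modelsE e

/-- Derivable sharpening `T ⊢ s ≼ u`. -/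
inductive Sharpens {A S : Type} (star : S) (T : Set (SExpr A S)) : S → S → Prop
  | of_mem {s u : S} : SExpr.sharp s u ∈ T → Sharpens star T s u
  | to_star (s : S) : Sharpens star T s star
  | refl (s : S) : Sharpens star T s s
  | trans {s t u : S} : SExpr.sharp s t ∈ T → Sharpens star T t u → Sharpens star T s u

/-- An S5 standpoint structure `F` is a minimal model of a theory `T`. -/
def isMinimalModel {A S P : Type} {star : S} (F : SFFS A S P star) (T : Set (SExpr A S)) : Prop :=
  F.IsS5 ∧ F.isModel T ∧
  ∀ (P' : Type) (F' : SFFS A S P' star), pref F' F → F'.isModel T → (pref F' F ∧ pref F F')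

/-- Entailment for sets of formulas. -/
def EntailsF {A S : Type} (star : S) (T : Set (SForm A S)) (ψ : SForm A S) : Prop :=
  ∀ (P : Type) (F : SFFS A S P star), F.isModelF T → F.models ψ

/-- `U` is an expansion of `T`:
`U = {ψ | T ∪ {¬□_s φ : □_s φ ∉ U} ⊨ ψ}`. -/
def isExpansion {A S : Type} (star : S) (T U : Set (SForm A S)) : Prop :=
  U = {ψ | EntailsF star
        (T ∪ {χ | ∃ (s : S) (φ : SForm A S),
                    χ = SForm.neg (SForm.box s φ) ∧ SForm.box s φ ∉ U}) ψ}

/-- An S5 structure `F` is a minimal model of a set of formulas `T`. -/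
def isMinimalModelF {A S P : Type} {star : S} (F : SFFS A S P star)
    (T : Set (SForm A S)) : Prop :=
  F.IsS5 ∧ F.isModelF T ∧
  ∀ (P' : Type) (F' : SFFS A S P' star), pref F' F → F'.isModelF T →
    (pref F' F ∧ pref F F')

/-!
At an inner point of any standpoint structure, and hence everywhere in an S5 structure,
satisfaction depends only on the valuation of the point and on the sets `γ(σ(s))`; at an
outer point it depends in addition on the sets `γ(τ(s))`. Since `A` is finite, every valuation
has a characteristic formula, so `Th(F)` pins down the sets `γ(σ(s))` and bounds the sets `γ(τ(s))`.

If `Th(F)` is an expansion of `T` and `F' ⊴ F` is a model of `T`, then `F'` has the same inner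
valuation sets as `F`, so it satisfies every `¬□_s φ` with `□_s φ ∉ Th(F)`, hence all of `Th(F)`;
this bounds `γ'(τ'(s))` by `γ(σ(s))`, i.e. `F ⊴ F'`. Conversely, let `F` be minimal and `G` a model
of `T` and of the negated boxes. Gluing `F`, as inner part, to a copy of the inner (resp. outer)
points of `G`, as outer part, gives models of `T` below `F`; minimality bounds `γ_G(σ_G(s))`
(resp. `γ_G(τ_G(s))`) by `γ(σ(s))`, the negated boxes give the reverse inclusion for `σ`, so `F ⊴ G`,
and every formula true in the S5 structure `F` is then true in `G`.
-/

variable {A S P Q : Type} {star : S}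

namespace SFFS

theorem notMem_tau_of_mem_sig (F : SFFS A S P star) {s u : S} {π : P} (hπ : π ∈ F.sig s) :
    π ∉ F.tau u :=
  fun hτ => (F.sig_tau_disj s u).subset ⟨hπ, hτ⟩

theorem sig_subset_sig_star (F : SFFS A S P star) (s : S) : F.sig s ⊆ F.sig star := by
  intro π hπ
  have hπ' : π ∈ F.sig star ∪ F.tau star := F.star_union ▸ F.sig_sub s hπ
  exact hπ'.resolve_right (F.notMem_tau_of_mem_sig hπ)

theorem tau_subset_tau_star (F : SFFS A S P star) (s : S) : F.tau s ⊆ F.tau star := by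
  intro π hπ
  have hπ' : π ∈ F.sig star ∪ F.tau star := F.star_union ▸ F.tau_sub s hπ
  exact hπ'.resolve_left fun hσ => F.notMem_tau_of_mem_sig hσ hπ

theorem IsS5.sig_star_eq_Pi {F : SFFS A S P star} (hF : F.IsS5) : F.sig star = F.Pi := by
  simpa [hF star] using F.star_union

def innerVals (F : SFFS A S P star) (s : S) : Set (Set A) := F.val '' F.sig s

def outerVals (F : SFFS A S P star) (s : S) : Set (Set A) := F.val '' F.tau s

end SFFS

namespace SForm

/-- Satisfaction at an inner point with valuation `v`, in a structure whose inner valuation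
sets are `V`. -/
def evalIn (V : S → Set (Set A)) : SForm A S → Set A → Prop
  | atom p, v => p ∈ v
  | neg φ, v => ¬ evalIn V φ v
  | and φ ψ, v => evalIn V φ v ∧ evalIn V ψ v
  | box s φ, _ => ∀ w ∈ V s, evalIn V φ w

/-- Satisfaction at an outer point with valuation `v`, in a structure whose inner and outer
valuation sets are `V` and `W`. -/
def evalOut (V W : S → Set (Set A)) : SForm A S → Set A → Prop
  | atom p, v => p ∈ v
  | neg φ, v => ¬ evalOut V W φ v
  | and φ ψ, v => evalOut V W φ v ∧ evalOut V W ψ v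
  | box s φ, _ => (∀ w ∈ V s, evalIn V φ w) ∧ ∀ w ∈ W s, evalOut V W φ w

theorem evalOut_iff_evalIn_of_subset {V W : S → Set (Set A)} (hWV : ∀ s, W s ⊆ V s)
    (φ : SForm A S) (v : Set A) : evalOut V W φ v ↔ evalIn V φ v := by
  induction φ generalizing v with
  | atom p => rfl
  | neg φ ih => simp only [evalOut, evalIn, ih]
  | and φ ψ ih₁ ih₂ => simp only [evalOut, evalIn, ih₁, ih₂]
  | box s φ ih =>
    simp only [evalOut, evalIn, ih]
    exact and_iff_left_of_imp fun h w hw => h w (hWV s hw)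

theorem evalOut_iff_evalIn_of_forall_box {V V' : S → Set (Set A)}
    (hbox : ∀ s φ, (∀ w ∈ V' s, evalIn V' φ w) → ∀ w ∈ V s, evalIn V φ w)
    (φ : SForm A S) (v : Set A) : evalOut V V' φ v ↔ evalIn V' φ v := by
  induction φ generalizing v with
  | atom p => rfl
  | neg φ ih => simp only [evalOut, evalIn, ih]
  | and φ ψ ih₁ ih₂ => simp only [evalOut, evalIn, ih₁, ih₂]
  | box s φ ih =>
    simp only [evalOut, evalIn, ih]
    exact and_iff_right_of_imp (hbox s φ)

end SForm

open SForm

namespace SFFS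

theorem sat_iff_evalIn (F : SFFS A S P star) (φ : SForm A S) {π : P} (hπ : π ∈ F.sig star) :
    F.sat φ π ↔ evalIn F.innerVals φ (F.val π) := by
  induction φ generalizing π with
  | atom p => rfl
  | neg φ ih => simp only [sat, evalIn, ih hπ]
  | and φ ψ ih₁ ih₂ => simp only [sat, evalIn, ih₁ hπ, ih₂ hπ]
  | box s φ ih =>
    simp only [sat, evalIn, innerVals, Set.forall_mem_image, hπ, F.notMem_tau_of_mem_sig hπ,
      true_implies, false_implies, and_true]
    exact forall₂_congr fun π' hπ' => ih (F.sig_subset_sig_star s hπ')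

theorem sat_iff_evalOut (F : SFFS A S P star) (φ : SForm A S) {π : P} (hπ : π ∈ F.tau star) :
    F.sat φ π ↔ evalOut F.innerVals F.outerVals φ (F.val π) := by
  induction φ generalizing π with
  | atom p => rfl
  | neg φ ih => simp only [sat, evalOut, ih hπ]
  | and φ ψ ih₁ ih₂ => simp only [sat, evalOut, ih₁ hπ, ih₂ hπ]
  | box s φ ih =>
    have hσ : π ∉ F.sig star := fun hσ => F.notMem_tau_of_mem_sig hσ hπ
    simp only [sat, evalOut, innerVals, outerVals, Set.forall_mem_image, hπ, hσ, true_implies,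
      false_implies, true_and, Set.mem_union, or_imp, forall_and]
    exact and_congr (forall₂_congr fun π' hπ' => F.sat_iff_evalIn φ (F.sig_subset_sig_star s hπ'))
      (forall₂_congr fun π' hπ' => ih (F.tau_subset_tau_star s hπ'))

theorem forall_evalIn_of_sat_box (F : SFFS A S P star) {s : S} {φ : SForm A S} {π : P}
    (hπ : π ∈ F.Pi) (h : F.sat (box s φ) π) : ∀ w ∈ F.innerVals s, evalIn F.innerVals φ w := by
  have hsig : ∀ π' ∈ F.sig s, F.sat φ π' := by
    rw [← F.star_union] at hπ
    exact hπ.elim h.1 fun hτ π' hπ' => h.2 hτ π' (Or.inl hπ')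
  rintro _ ⟨π', hπ', rfl⟩
  exact (F.sat_iff_evalIn φ (F.sig_subset_sig_star s hπ')).1 (hsig π' hπ')

namespace IsS5

variable {F : SFFS A S P star} {G : SFFS A S Q star}

theorem models_iff (hF : F.IsS5) (φ : SForm A S) :
    F.models φ ↔ ∀ w ∈ F.innerVals star, evalIn F.innerVals φ w := by
  rw [models, ← hF.sig_star_eq_Pi, innerVals, Set.forall_mem_image]
  exact forall₂_congr fun _ hπ => F.sat_iff_evalIn φ hπ

theorem models_box_iff (hF : F.IsS5) (s : S) (φ : SForm A S) :
    F.models (box s φ) ↔ ∀ w ∈ F.innerVals s, evalIn F.innerVals φ w := by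
  obtain ⟨π, hπ⟩ := F.sig_nonempty star
  rw [hF.models_iff]
  exact ⟨fun h => h _ ⟨π, hπ, rfl⟩, fun h _ _ => h⟩

theorem pref_iff (hF : F.IsS5) :
    pref F G ↔ G.innerVals = F.innerVals ∧ ∀ s, G.outerVals s ⊆ F.innerVals s := by
  simp only [pref, prefS, hF _, Set.union_empty, funext_iff, forall_and]
  rfl

theorem pref_iff' (hF : F.IsS5) : pref G F ↔ F.innerVals = G.innerVals := by
  simp only [pref, prefS, hF _, Set.image_empty, Set.empty_subset, and_true, funext_iff]
  rfl

theorem models_of_pref (hF : F.IsS5) (hFG : pref F G) {ψ : SForm A S} (hψ : F.models ψ) :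
    G.models ψ := by
  obtain ⟨hV, hW⟩ := hF.pref_iff.1 hFG
  rw [hF.models_iff] at hψ
  intro π hπ
  rw [← G.star_union] at hπ
  rcases hπ with hσ | hτ
  · rw [G.sat_iff_evalIn ψ hσ, hV]
    exact hψ _ (hV ▸ ⟨π, hσ, rfl⟩)
  · rw [G.sat_iff_evalOut ψ hτ, hV, evalOut_iff_evalIn_of_subset hW]
    exact hψ _ (hW star ⟨π, hτ, rfl⟩)

end IsS5

def glue (F : SFFS A S P star) (hF : F.IsS5) (g : Q → Set A) (O : S → Set Q)
    (hO : ∀ s, O s ⊆ O star) : SFFS A S (P ⊕ Q) star where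
  Pi := Sum.inl '' F.Pi ∪ Sum.inr '' O star
  sig s := Sum.inl '' F.sig s
  tau s := Sum.inr '' O s
  val := Sum.elim F.val g
  nonempty_Pi := (F.nonempty_Pi.image _).mono Set.subset_union_left
  sig_sub s := (Set.image_mono (F.sig_sub s)).trans Set.subset_union_left
  tau_sub s := (Set.image_mono (hO s)).trans Set.subset_union_right
  star_union := by rw [hF.sig_star_eq_Pi]
  sig_nonempty s := (F.sig_nonempty s).image _
  sig_tau_disj s u := by
    ext x
    simp only [Set.mem_inter_iff, Set.mem_image, Set.mem_empty_iff_false, iff_false]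
    rintro ⟨⟨π, -, rfl⟩, q, -, h⟩
    exact Sum.inr_ne_inl h

section Glue

variable {F : SFFS A S P star} (hF : F.IsS5) {g : Q → Set A} {O : S → Set Q}
  (hO : ∀ s, O s ⊆ O star)

theorem glue_innerVals : (F.glue hF g O hO).innerVals = F.innerVals :=
  funext fun _ => Set.image_image _ _ _

theorem glue_outerVals : (F.glue hF g O hO).outerVals = fun s => g '' O s :=
  funext fun _ => Set.image_image _ _ _

theorem glue_models_iff (φ : SForm A S) :
    (F.glue hF g O hO).models φ ↔
      F.models φ ∧ ∀ q ∈ O star, evalOut F.innerVals (fun s => g '' O s) φ (g q) := by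
  have hinl : ∀ π ∈ F.Pi, (F.glue hF g O hO).sat φ (Sum.inl π) ↔ F.sat φ π := by
    intro π hπ
    rw [← hF.sig_star_eq_Pi] at hπ
    rw [sat_iff_evalIn _ φ (Set.mem_image_of_mem _ hπ), glue_innerVals, F.sat_iff_evalIn φ hπ]
    rfl
  have hinr : ∀ q ∈ O star, (F.glue hF g O hO).sat φ (Sum.inr q) ↔
      evalOut F.innerVals (fun s => g '' O s) φ (g q) := by
    intro q hq
    rw [sat_iff_evalOut _ φ (Set.mem_image_of_mem _ hq), glue_innerVals, glue_outerVals]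
    rfl
  change (∀ x ∈ Sum.inl '' F.Pi ∪ Sum.inr '' O star, _) ↔ _
  simp only [Set.mem_union, or_imp, forall_and, Set.forall_mem_image]
  exact and_congr (forall₂_congr hinl) (forall₂_congr hinr)

theorem glue_pref : pref (F.glue hF g O hO) F :=
  hF.pref_iff'.2 (glue_innerVals hF hO).symm

end Glue

theorem image_subset_innerVals_of_isMinimalModelF {F : SFFS A S P star} {T : Set (SForm A S)}
    (hmin : isMinimalModelF F T) {g : Q → Set A} {O : S → Set Q} (hO : ∀ s, O s ⊆ O star)
    (hT : (F.glue hmin.1 g O hO).isModelF T) (s : S) : g '' O s ⊆ F.innerVals s := by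
  have hpref := (hmin.2.2 _ _ (glue_pref hmin.1 hO) hT).2
  simpa only [glue_outerVals] using (hmin.1.pref_iff.1 hpref).2 s

end SFFS

namespace SForm

open Classical in
noncomputable def literal (v : Set A) (p : A) : SForm A S :=
  if p ∈ v then atom p else neg (atom p)

/-- The atom `a₀` only serves to write `⊤`. -/
noncomputable def charForm [Fintype A] (a₀ : A) (v : Set A) : SForm A S :=
  Finset.univ.toList.foldr (fun p χ => and (literal v p) χ) (neg (and (atom a₀) (neg (atom a₀))))

def IsPropInterp (I : SForm A S → Prop) (v : Set A) : Prop :=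
  (∀ p, I (atom p) ↔ p ∈ v) ∧ (∀ φ, I (neg φ) ↔ ¬ I φ) ∧ ∀ φ ψ, I (and φ ψ) ↔ I φ ∧ I ψ

theorem IsPropInterp.charForm_iff [Fintype A] {I : SForm A S → Prop} {w : Set A}
    (hI : IsPropInterp I w) (a₀ : A) (v : Set A) : I (charForm a₀ v) ↔ w = v := by
  obtain ⟨hatom, hneg, hand⟩ := hI
  have hlit : ∀ p, I (literal v p) ↔ (p ∈ w ↔ p ∈ v) := by
    intro p
    unfold literal
    split_ifs with hp <;> simp [hatom, hneg, hp]
  have hfold : ∀ l : List A, I (l.foldr (fun p χ => and (literal v p) χ)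
      (neg (and (atom a₀) (neg (atom a₀))))) ↔ ∀ p ∈ l, (p ∈ w ↔ p ∈ v) := by
    intro l
    induction l with
    | nil => simp [hneg, hand]
    | cons p l ih => simp [hand, hlit, ih]
  rw [charForm, hfold, Set.ext_iff]
  simp

theorem isPropInterp_evalIn (V : S → Set (Set A)) (v : Set A) :
    IsPropInterp (evalIn V · v) v :=
  ⟨fun _ => Iff.rfl, fun _ => Iff.rfl, fun _ _ => Iff.rfl⟩

end SForm

theorem SFFS.isPropInterp_sat (F : SFFS A S P star) (π : P) :
    IsPropInterp (F.sat · π) (F.val π) :=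
  ⟨fun _ => Iff.rfl, fun _ => Iff.rfl, fun _ _ => Iff.rfl⟩

/-- The set of negated boxes added to `T` in `isExpansion`. -/
def negIntrospection (U : Set (SForm A S)) : Set (SForm A S) :=
  {χ | ∃ (s : S) (φ : SForm A S), χ = SForm.neg (SForm.box s φ) ∧ SForm.box s φ ∉ U}

section Expansion

variable {F : SFFS A S P star} {G : SFFS A S Q star}

theorem innerVals_subset_of_forall_box [Fintype A]
    (hbox : ∀ s φ, (∀ w ∈ G.innerVals s, evalIn G.innerVals φ w) →
      ∀ w ∈ F.innerVals s, evalIn F.innerVals φ w) (s : S) :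
    F.innerVals s ⊆ G.innerVals s := by
  intro v hv
  by_contra hvG
  obtain ⟨w, hw⟩ := (G.sig_nonempty s).image G.val
  obtain ⟨a₀, -⟩ := not_forall.1 (mt Set.ext (ne_of_mem_of_not_mem hw hvG))
  have hnot : ∀ w ∈ G.innerVals s, evalIn G.innerVals (neg (charForm a₀ v)) w :=
    fun w hw hwv => hvG (((isPropInterp_evalIn _ w).charForm_iff a₀ v).1 hwv ▸ hw)
  exact hbox s _ hnot v hv (((isPropInterp_evalIn _ v).charForm_iff a₀ v).2 rfl)

theorem outerVals_subset_of_models_imp [Fintype A] (hF : F.IsS5)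
    (hFG : ∀ ψ, F.models ψ → G.models ψ) (s : S) : G.outerVals s ⊆ F.innerVals s := by
  rintro _ ⟨x, hx, rfl⟩
  by_contra hxF
  obtain ⟨w, hw⟩ := (F.sig_nonempty s).image F.val
  obtain ⟨a₀, -⟩ := not_forall.1 (mt Set.ext (ne_of_mem_of_not_mem hw hxF))
  have hbox : F.models (box s (neg (charForm a₀ (G.val x)))) := by
    rw [hF.models_box_iff]
    exact fun w hw hwx => hxF (((isPropInterp_evalIn _ w).charForm_iff a₀ _).1 hwx ▸ hw)
  have hneg := (hFG _ hbox x (G.tau_sub s hx)).2 (G.tau_subset_tau_star s hx) x (Or.inr hx)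
  exact hneg (((G.isPropInterp_sat x).charForm_iff a₀ _).2 rfl)

theorem isModelF_negIntrospection (hF : F.IsS5) (hV : G.innerVals = F.innerVals) :
    G.isModelF (negIntrospection {ψ | F.models ψ}) := by
  rintro _ ⟨s, φ, rfl, hφ⟩ π hπ hbox
  change ¬ F.models _ at hφ
  rw [hF.models_box_iff, ← hV] at hφ
  exact hφ (G.forall_evalIn_of_sat_box hπ hbox)

theorem forall_box_of_isModelF_negIntrospection (hF : F.IsS5)
    (hG : G.isModelF (negIntrospection {ψ | F.models ψ})) (s : S) (φ : SForm A S)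
    (h : ∀ w ∈ G.innerVals s, evalIn G.innerVals φ w) :
    ∀ w ∈ F.innerVals s, evalIn F.innerVals φ w := by
  rw [← hF.models_box_iff]
  by_contra hφ
  obtain ⟨π, hπ⟩ := G.sig_nonempty star
  exact hG _ ⟨s, φ, rfl, hφ⟩ π (G.sig_sub star hπ) ((G.sat_iff_evalIn _ hπ).2 h)

theorem pref_of_isMinimalModelF [Fintype A] {T : Set (SForm A S)} (hmin : isMinimalModelF F T)
    (hG : G.isModelF (T ∪ negIntrospection {ψ | F.models ψ})) : pref F G := by
  have ⟨hF, hT, _⟩ := hmin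
  have hGT : G.isModelF T := fun φ hφ => hG φ (Or.inl hφ)
  have hbox := forall_box_of_isModelF_negIntrospection hF fun φ hφ => hG φ (Or.inr hφ)
  have hinner : G.innerVals = F.innerVals := by
    refine funext fun s => subset_antisymm ?_ (innerVals_subset_of_forall_box hbox s)
    refine SFFS.image_subset_innerVals_of_isMinimalModelF hmin G.sig_subset_sig_star
      (fun φ hφ => (SFFS.glue_models_iff _ _ φ).2 ⟨hT φ hφ, fun q hq => ?_⟩) s
    exact (evalOut_iff_evalIn_of_forall_box hbox φ _).2
      ((G.sat_iff_evalIn φ hq).1 (hGT φ hφ q (G.sig_sub star hq)))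
  refine hF.pref_iff.2 ⟨hinner, SFFS.image_subset_innerVals_of_isMinimalModelF hmin
    G.tau_subset_tau_star (fun φ hφ => (SFFS.glue_models_iff _ _ φ).2 ⟨hT φ hφ, fun q hq => ?_⟩)⟩
  rw [← hinner]
  exact (G.sat_iff_evalOut φ hq).1 (hGT φ hφ q (G.tau_sub star hq))

theorem isExpansion_of_isMinimalModelF [Fintype A] {T : Set (SForm A S)}
    (hmin : isMinimalModelF F T) : isExpansion star T {ψ | F.models ψ} := by
  have ⟨hF, hT, _⟩ := hmin
  refine Set.ext fun ψ => ⟨fun hψ Q G hG => ?_, fun hψ => hψ P F ?_⟩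
  · exact hF.models_of_pref (pref_of_isMinimalModelF hmin hG) hψ
  · rintro φ (hφ | hφ)
    exacts [hT φ hφ, isModelF_negIntrospection hF rfl φ hφ]

theorem isMinimalModelF_of_isExpansion [Fintype A] {T : Set (SForm A S)} (hF : F.IsS5)
    (hexp : isExpansion star T {ψ | F.models ψ}) : isMinimalModelF F T := by
  have hentails : ∀ ψ, F.models ψ → EntailsF star (T ∪ negIntrospection {ψ | F.models ψ}) ψ :=
    fun ψ hψ => (Set.ext_iff.1 hexp ψ).1 hψ
  refine ⟨hF, fun φ hφ => (Set.ext_iff.1 hexp φ).2 fun _ G hG => hG φ (Or.inl hφ),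
    fun _ G hGF hGT => ⟨hGF, ?_⟩⟩
  have hV := (hF.pref_iff'.1 hGF).symm
  have hGU : G.isModelF (T ∪ negIntrospection {ψ | F.models ψ}) := by
    rintro φ (hφ | hφ)
    exacts [hGT φ hφ, isModelF_negIntrospection hF hV φ hφ]
  exact hF.pref_iff.2 ⟨hV, outerVals_subset_of_models_imp hF fun ψ hψ => hentails ψ hψ _ G hGU⟩

end Expansion

/-- An S5 standpoint structure `F` is a minimal model of `T` iff
`Th(F) = {ψ : F ⊩ ψ}` is an expansion of `T`. -/
theorem minimal_model_iff_expansion {A S P : Type} [Fintype A] (star : S)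
    (T : Set (SForm A S)) (F : SFFS A S P star) (hS5 : F.IsS5) :
    isMinimalModelF F T ↔ isExpansion star T {ψ | F.models ψ} :=
  ⟨isExpansion_of_isMinimalModelF, isMinimalModelF_of_isExpansion hS5⟩
end

section
/- Let T be a theory of S4F standpoint logic, ξ a formula, and z ∈ A an atom not occurring in T ∪ {ξ}. Define T_scep := T ∪ {(□_*¬□_* z ∧ ¬□_*¬□_* ξ) → □_* z}. Then T does NOT sceptically entail ξ (some minimal model of T fails to satisfy ξ) if and only if T_scep has a minimal model. -/
/-- Implication `φ → χ`, abbreviating `¬(φ ∧ ¬χ)`. -/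
def SForm.impl {A S : Type} (φ χ : SForm A S) : SForm A S :=
  SForm.neg (SForm.and φ (SForm.neg χ))

/-- The atom `z` occurs in a formula. -/
def occursF {A S : Type} (z : A) : SForm A S → Prop
  | SForm.atom p => p = z
  | SForm.neg φ => occursF z φ
  | SForm.and φ ψ => occursF z φ ∨ occursF z ψ
  | SForm.box _ φ => occursF z φ

/-- The atom `z` occurs in an expression. -/
def occursE {A S : Type} (z : A) : SExpr A S → Prop
  | SExpr.form φ => occursF z φ
  | SExpr.sharp _ _ => False

/-- The additional formula of `T_scep`: `(□_*¬□_* z ∧ ¬□_*¬□_* ξ) → □_* z`. -/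
def scepAx {A S : Type} (star : S) (z : A) (ξ : SForm A S) : SForm A S :=
  SForm.impl
    (SForm.and (SForm.box star (SForm.neg (SForm.box star (SForm.atom z))))
               (SForm.neg (SForm.box star (SForm.neg (SForm.box star ξ)))))
    (SForm.box star (SForm.atom z))


variable {A S P : Type} {star : S}

lemma disj_elim (F : SFFS A S P star) {s u : S} {π : P}
    (h1 : π ∈ F.sig s) (h2 : π ∈ F.tau u) : False := by
  have : π ∈ F.sig s ∩ F.tau u := ⟨h1, h2⟩
  rw [F.sig_tau_disj s u] at this
  exact this

lemma sig_sub_sigstar (F : SFFS A S P star) (s : S) : F.sig s ⊆ F.sig star := by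
  intro π hπ
  have hPi : π ∈ F.sig star ∪ F.tau star := F.star_union ▸ F.sig_sub s hπ
  rcases hPi with h | h
  · exact h
  · exact (disj_elim F hπ h).elim

lemma sigstar_eq_Pi {F : SFFS A S P star} (hS5 : F.IsS5) : F.sig star = F.Pi := by
  have h := F.star_union
  rw [hS5 star] at h
  simpa using h

/-- Lemma A: if ξ fails at some σ(*)-world, scepAx holds everywhere. -/
lemma modelsScepAx (F : SFFS A S P star) (z : A) (ξ : SForm A S)
    {π₀ : P} (h₀ : π₀ ∈ F.sig star) (hξ : ¬ F.sat ξ π₀) (π : P) :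
    F.sat (scepAx star z ξ) π := by
  have hnb : ∀ π' : P, π' ∈ F.sig star ∪ F.tau star → ¬ F.sat (SForm.box star ξ) π' := by
    rintro π' (h' | h') hb
    · exact hξ (hb.1 h' π₀ h₀)
    · exact hξ (hb.2 h' π₀ (Or.inl h₀))
  intro hcon
  have hant := hcon.1
  have hB : ¬ F.sat (SForm.box star (SForm.neg (SForm.box star ξ))) π := hant.2
  apply hB
  exact ⟨fun _ π' h' => hnb π' (Or.inl h'), fun _ π' h' => hnb π' h'⟩

/-- Lemma B: satisfaction at σ(*)-worlds depends only on the value and the σ-images. -/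
lemma sat_transfer {P1 P2 : Type} (F1 : SFFS A S P1 star) (F2 : SFFS A S P2 star)
    (H : ∀ s, F1.val '' F1.sig s = F2.val '' F2.sig s) :
    ∀ φ : SForm A S, ∀ π₁ ∈ F1.sig star, ∀ π₂ ∈ F2.sig star,
      F1.val π₁ = F2.val π₂ → (F1.sat φ π₁ ↔ F2.sat φ π₂) := by
  intro φ
  induction φ with
  | atom p =>
    intro π₁ _ π₂ _ hv
    show p ∈ F1.val π₁ ↔ p ∈ F2.val π₂
    rw [hv]
  | neg φ ih =>
    intro π₁ h₁ π₂ h₂ hv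
    show ¬ F1.sat φ π₁ ↔ ¬ F2.sat φ π₂
    rw [ih π₁ h₁ π₂ h₂ hv]
  | and φ ψ ih1 ih2 =>
    intro π₁ h₁ π₂ h₂ hv
    show (F1.sat φ π₁ ∧ F1.sat ψ π₁) ↔ (F2.sat φ π₂ ∧ F2.sat ψ π₂)
    rw [ih1 π₁ h₁ π₂ h₂ hv, ih2 π₁ h₁ π₂ h₂ hv]
  | box s φ ih =>
    intro π₁ h₁ π₂ h₂ _
    show ((π₁ ∈ F1.sig star → ∀ π' ∈ F1.sig s, F1.sat φ π') ∧
          (π₁ ∈ F1.tau star → ∀ π' ∈ F1.sig s ∪ F1.tau s, F1.sat φ π')) ↔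
         ((π₂ ∈ F2.sig star → ∀ π' ∈ F2.sig s, F2.sat φ π') ∧
          (π₂ ∈ F2.tau star → ∀ π' ∈ F2.sig s ∪ F2.tau s, F2.sat φ π'))
    constructor
    · rintro ⟨ha, -⟩
      refine ⟨fun _ π₂' h₂' => ?_, fun h => (disj_elim F2 h₂ h).elim⟩
      have : F2.val π₂' ∈ F1.val '' F1.sig s := (H s) ▸ ⟨π₂', h₂', rfl⟩
      obtain ⟨π₁', h₁', hv'⟩ := this
      exact (ih π₁' (sig_sub_sigstar F1 s h₁') π₂' (sig_sub_sigstar F2 s h₂') hv').mp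
        (ha h₁ π₁' h₁')
    · rintro ⟨ha, -⟩
      refine ⟨fun _ π₁' h₁' => ?_, fun h => (disj_elim F1 h₁ h).elim⟩
      have : F1.val π₁' ∈ F2.val '' F2.sig s := (H s).symm ▸ ⟨π₁', h₁', rfl⟩
      obtain ⟨π₂', h₂', hv'⟩ := this
      exact (ih π₁' (sig_sub_sigstar F1 s h₁') π₂' (sig_sub_sigstar F2 s h₂') hv'.symm).mpr
        (ha h₂ π₂' h₂')


variable {A S P : Type} {star : S}

/-- Doubling an S5 structure: a σ-copy and a τ-copy with `z` removed. -/
def double (G : SFFS A S P star) (z : A) (hS5 : G.IsS5) : SFFS A S (P × Bool) star where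
  Pi := G.Pi ×ˢ (Set.univ : Set Bool)
  sig s := G.sig s ×ˢ ({true} : Set Bool)
  tau s := G.sig s ×ˢ ({false} : Set Bool)
  val p := if p.2 then G.val p.1 else G.val p.1 \ {z}
  nonempty_Pi := ⟨(G.nonempty_Pi.choose, true), ⟨G.nonempty_Pi.choose_spec, trivial⟩⟩
  sig_sub s := Set.prod_mono (G.sig_sub s) (Set.subset_univ _)
  tau_sub s := Set.prod_mono (G.sig_sub s) (Set.subset_univ _)
  star_union := by
    have hσ : G.sig star = G.Pi := sigstar_eq_Pi hS5
    ext ⟨π, b⟩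
    cases b <;> simp [hσ, Set.mem_prod]
  sig_nonempty s :=
    ⟨((G.sig_nonempty s).choose, true), ⟨(G.sig_nonempty s).choose_spec, rfl⟩⟩
  sig_tau_disj s u := by
    ext ⟨π, b⟩
    cases b <;> simp [Set.mem_prod]

lemma double_mem_sig {G : SFFS A S P star} {z : A} {hS5 : G.IsS5} {s : S} {π : P} {b : Bool} :
    (π, b) ∈ (double G z hS5).sig s ↔ π ∈ G.sig s ∧ b = true := by
  show (π, b) ∈ G.sig s ×ˢ ({true} : Set Bool) ↔ _
  rw [Set.mem_prod, Set.mem_singleton_iff]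

lemma double_mem_tau {G : SFFS A S P star} {z : A} {hS5 : G.IsS5} {s : S} {π : P} {b : Bool} :
    (π, b) ∈ (double G z hS5).tau s ↔ π ∈ G.sig s ∧ b = false := by
  show (π, b) ∈ G.sig s ×ˢ ({false} : Set Bool) ↔ _
  rw [Set.mem_prod, Set.mem_singleton_iff]

lemma double_val_true {G : SFFS A S P star} {z : A} {hS5 : G.IsS5} {π : P} :
    (double G z hS5).val (π, true) = G.val π := by simp [double]

lemma double_val_false {G : SFFS A S P star} {z : A} {hS5 : G.IsS5} {π : P} :
    (double G z hS5).val (π, false) = G.val π \ {z} := by simp [double]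

/-- z-free formulas transfer between `G` and its double. -/
lemma double_sat (G : SFFS A S P star) (z : A) (hS5 : G.IsS5) :
    ∀ φ : SForm A S, ¬ occursF z φ →
      ∀ π ∈ G.Pi, ∀ b : Bool, ((double G z hS5).sat φ (π, b) ↔ G.sat φ π) := by
  have hσ : G.sig star = G.Pi := sigstar_eq_Pi hS5
  intro φ
  induction φ with
  | atom p =>
    intro hz π hπ b
    have hpz : p ≠ z := hz
    show p ∈ (double G z hS5).val (π, b) ↔ p ∈ G.val π
    cases b
    · rw [double_val_false]; simp [hpz]
    · rw [double_val_true]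
  | neg φ ih =>
    intro hz π hπ b
    show ¬ _ ↔ ¬ _
    rw [ih hz π hπ b]
  | and φ ψ ih1 ih2 =>
    intro hz π hπ b
    have hz1 : ¬ occursF z φ := fun h => hz (Or.inl h)
    have hz2 : ¬ occursF z ψ := fun h => hz (Or.inr h)
    show (_ ∧ _) ↔ (_ ∧ _)
    rw [ih1 hz1 π hπ b, ih2 hz2 π hπ b]
  | box s φ ih =>
    intro hz π hπ b
    have hπσ : π ∈ G.sig star := hσ ▸ hπ
    have hπτ : π ∉ G.tau star := by rw [hS5 star]; exact Set.notMem_empty π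
    have key : ∀ π' ∈ G.sig s, ∀ b' : Bool, ((double G z hS5).sat φ (π', b') ↔ G.sat φ π') :=
      fun π' h' b' => ih hz π' (G.sig_sub s h') b'
    show ((π, b) ∈ (double G z hS5).sig star → ∀ π' ∈ (double G z hS5).sig s, _) ∧
         ((π, b) ∈ (double G z hS5).tau star →
            ∀ π' ∈ (double G z hS5).sig s ∪ (double G z hS5).tau s, _) ↔ _
    constructor
    · rintro ⟨h1, h2⟩
      refine ⟨fun _ π' h' => ?_, fun h => absurd h hπτ⟩
      cases b with
      | true =>
        exact (key π' h' true).mp (h1 (double_mem_sig.mpr ⟨hπσ, rfl⟩) (π', true)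
          (double_mem_sig.mpr ⟨h', rfl⟩))
      | false =>
        exact (key π' h' true).mp (h2 (double_mem_tau.mpr ⟨hπσ, rfl⟩) (π', true)
          (Or.inl (double_mem_sig.mpr ⟨h', rfl⟩)))
    · rintro ⟨h1, -⟩
      constructor
      · rintro hmem ⟨π', b'⟩ h'
        have h'' := double_mem_sig.mp h'
        exact (key π' h''.1 b').mpr (h1 hπσ π' h''.1)
      · rintro hmem ⟨π', b'⟩ h'
        rcases h' with h' | h'
        · have h'' := double_mem_sig.mp h'
          exact (key π' h''.1 b').mpr (h1 hπσ π' h''.1)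
        · have h'' := double_mem_tau.mp h'
          exact (key π' h''.1 b').mpr (h1 hπσ π' h''.1)


variable {A S P : Type} {star : S}

lemma double_mem_Pi {G : SFFS A S P star} {z : A} {hS5 : G.IsS5} {π : P} {b : Bool} :
    (π, b) ∈ (double G z hS5).Pi ↔ π ∈ G.Pi := by
  show (π, b) ∈ G.Pi ×ˢ (Set.univ : Set Bool) ↔ _
  rw [Set.mem_prod]
  simp

/-- In the double, `□_* z` holds at every true-world, given that `z` holds everywhere in `G`. -/
lemma double_boxz (G : SFFS A S P star) (z : A) (hS5 : G.IsS5)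
    (hGz : ∀ π ∈ G.Pi, z ∈ G.val π) (π : P) :
    (double G z hS5).sat (SForm.box star (SForm.atom z)) (π, true) := by
  constructor
  · rintro _ ⟨π', b'⟩ h'
    have h'' := double_mem_sig.mp h'
    show z ∈ (double G z hS5).val (π', b')
    rw [h''.2, double_val_true]
    exact hGz π' (G.sig_sub star h''.1)
  · intro h
    exact absurd (double_mem_tau.mp h).2 (by simp)

/-- The double satisfies `scepAx` everywhere, given that `z` holds everywhere in `G`. -/
lemma double_sat_scepAx (G : SFFS A S P star) (z : A) (hS5 : G.IsS5) (ξ : SForm A S)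
    (hGz : ∀ π ∈ G.Pi, z ∈ G.val π) :
    ∀ p ∈ (double G z hS5).Pi, (double G z hS5).sat (scepAx star z ξ) p := by
  have hσ : G.sig star = G.Pi := sigstar_eq_Pi hS5
  rintro ⟨π, b⟩ hp
  have hπ : π ∈ G.Pi := double_mem_Pi.mp hp
  have hπσ : π ∈ G.sig star := hσ ▸ hπ
  cases b with
  | true =>
    intro hcon
    exact hcon.2 (double_boxz G z hS5 hGz π)
  | false =>
    intro hcon
    have hant1 := hcon.1.1
    have h2 := hant1.2 (double_mem_tau.mpr ⟨hπσ, rfl⟩) (π, true)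
      (Or.inl (double_mem_sig.mpr ⟨hπσ, rfl⟩))
    exact h2 (double_boxz G z hS5 hGz π)

/-- The double is a model of any `z`-free theory that `G` models. -/
lemma double_isModel (G : SFFS A S P star) (z : A) (hS5 : G.IsS5)
    (T : Set (SExpr A S)) (hzT : ∀ e ∈ T, ¬ occursE z e) (hGT : G.isModel T) :
    (double G z hS5).isModel T := by
  intro e he
  cases e with
  | form φ =>
    rintro ⟨π, b⟩ hp
    have hπ : π ∈ G.Pi := double_mem_Pi.mp hp
    exact (double_sat G z hS5 φ (hzT _ he) π hπ b).mpr (hGT _ he π hπ)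
  | sharp s u =>
    rintro ⟨π, b⟩ hp
    have hππ := G.nonempty_Pi
    have hsu := hGT _ he hππ.choose hππ.choose_spec
    obtain ⟨h1, h2⟩ := hsu
    constructor
    · show G.sig s ×ˢ ({true} : Set Bool) ⊆ G.sig u ×ˢ ({true} : Set Bool)
      exact Set.prod_mono h1 subset_rfl
    · show G.sig s ×ˢ ({false} : Set Bool) ⊆ G.sig u ×ˢ ({false} : Set Bool)
      exact Set.prod_mono h1 subset_rfl

/-- The double is below `G` in the determination preorder. -/
lemma pref_double (G : SFFS A S P star) (z : A) (hS5 : G.IsS5) :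
    pref (double G z hS5) G := by
  intro s
  constructor
  · ext x
    constructor
    · rintro ⟨π, h, rfl⟩
      exact ⟨(π, true), double_mem_sig.mpr ⟨h, rfl⟩, double_val_true⟩
    · rintro ⟨⟨π, b⟩, h, rfl⟩
      have h' := double_mem_sig.mp h
      exact ⟨π, h'.1, by rw [h'.2, double_val_true]⟩
  · rw [hS5 s]
    simp


/-- `T` does not sceptically entail `ξ` (some minimal model of `T` fails to
satisfy `ξ`) iff `T_scep := T ∪ {(□_*¬□_* z ∧ ¬□_*¬□_* ξ) → □_* z}` has a minimal model,
provided the atom `z` does not occur in `T ∪ {ξ}`. -/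
theorem not_sceptical_iff_Tscep_has_minimal_model {A S : Type} (star : S)
    (T : Set (SExpr A S)) (ξ : SForm A S) (z : A)
    (hzT : ∀ e ∈ T, ¬ occursE z e) (hzξ : ¬ occursF z ξ) :
    (∃ (P : Type) (F : SFFS A S P star), isMinimalModel F T ∧ ¬ F.models ξ) ↔
    (∃ (P : Type) (F : SFFS A S P star),
       isMinimalModel F (T ∪ {SExpr.form (scepAx star z ξ)})) := by
  constructor
  · rintro ⟨P, F, ⟨hS5, hM, hmin⟩, hnξ⟩
    have hσ : F.sig star = F.Pi := sigstar_eq_Pi hS5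
    rw [SFFS.models] at hnξ
    push_neg at hnξ
    obtain ⟨π₀, hπ₀, hξ₀⟩ := hnξ
    refine ⟨P, F, hS5, ?_, ?_⟩
    · rintro e (he | he)
      · exact hM e he
      · rw [Set.mem_singleton_iff] at he
        subst he
        intro π _
        exact modelsScepAx F z ξ (hσ ▸ hπ₀) hξ₀ π
    · intro P' F' hp hM'
      exact hmin P' F' hp (fun e he => hM' e (Or.inl he))
  · rintro ⟨P, G, hS5, hMsc, hmin⟩
    have hσ : G.sig star = G.Pi := sigstar_eq_Pi hS5
    have hτ : ∀ s : S, ∀ π : P, π ∉ G.tau s := by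
      intro s π h
      rw [hS5 s] at h
      exact h
    have hGT : G.isModel T := fun e he => hMsc e (Or.inl he)
    have hGax : ∀ π ∈ G.Pi, G.sat (scepAx star z ξ) π :=
      hMsc (SExpr.form (scepAx star z ξ)) (Or.inr rfl)
    -- Step 1: G does not globally satisfy ξ
    have hnotξ : ¬ G.models ξ := by
      intro hGξ
      -- first: z holds everywhere in G
      have hGz : ∀ π ∈ G.Pi, z ∈ G.val π := by
        by_contra hc
        push_neg at hc
        obtain ⟨π₁, hπ₁, hz₁⟩ := hc
        have hπ₁σ : π₁ ∈ G.sig star := hσ ▸ hπ₁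
        refine hGax π₁ hπ₁ ⟨⟨⟨?_, ?_⟩, ?_⟩, ?_⟩
        · intro _ π' _
          intro hb
          exact hz₁ (hb.1 (by exact hσ ▸ G.sig_sub star ‹π' ∈ G.sig star›) π₁ hπ₁σ)
        · intro h
          exact (hτ star π₁ h).elim
        · intro hb
          have hnb := hb.1 hπ₁σ π₁ hπ₁σ
          exact hnb ⟨fun _ π'' h'' => hGξ π'' (G.sig_sub star h''),
            fun h => (hτ star π₁ h).elim⟩
        · intro hb
          exact hz₁ (hb.1 hπ₁σ π₁ hπ₁σ)
      -- the double of G refutes its minimality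
      have hDM : (double G z hS5).isModel (T ∪ {SExpr.form (scepAx star z ξ)}) := by
        rintro e (he | he)
        · exact double_isModel G z hS5 T hzT hGT e he
        · rw [Set.mem_singleton_iff] at he
          subst he
          intro p hp
          exact double_sat_scepAx G z hS5 ξ hGz p hp
      obtain ⟨-, hGD⟩ := hmin (P × Bool) (double G z hS5) (pref_double G z hS5) hDM
      have h2 := (hGD star).2
      obtain ⟨π₂, hπ₂⟩ := G.sig_nonempty star
      have hmem : (double G z hS5).val (π₂, false) ∈
          (double G z hS5).val '' (double G z hS5).tau star :=
        ⟨(π₂, false), double_mem_tau.mpr ⟨hπ₂, rfl⟩, rfl⟩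
      obtain ⟨π₃, hπ₃, hv⟩ := h2 hmem
      have hπ₃Pi : π₃ ∈ G.Pi := by
        rcases hπ₃ with h | h
        · exact G.sig_sub _ h
        · exact (hτ _ _ h).elim
      have hz3 : z ∈ G.val π₃ := hGz π₃ hπ₃Pi
      rw [hv, double_val_false] at hz3
      exact hz3.2 rfl
    -- Step 2: G is a minimal model of T
    refine ⟨P, G, ⟨hS5, hGT, ?_⟩, hnotξ⟩
    intro P' F' hp hMT'
    have H : ∀ s, F'.val '' F'.sig s = G.val '' G.sig s := fun s => ((hp s).1).symm
    have hnξ := hnotξ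
    rw [SFFS.models] at hnξ
    push_neg at hnξ
    obtain ⟨π₀, hπ₀, hξ₀⟩ := hnξ
    have hmem : G.val π₀ ∈ F'.val '' F'.sig star := (H star).symm ▸ ⟨π₀, hσ ▸ hπ₀, rfl⟩
    obtain ⟨π₀', h₀', hv₀⟩ := hmem
    have hξ' : ¬ F'.sat ξ π₀' := fun h =>
      hξ₀ ((sat_transfer F' G H ξ π₀' h₀' π₀ (hσ ▸ hπ₀) hv₀).mp h)
    have hM' : F'.isModel (T ∪ {SExpr.form (scepAx star z ξ)}) := by
      rintro e (he | he)
      · exact hMT' e he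
      · rw [Set.mem_singleton_iff] at he
        subst he
        intro π _
        exact modelsScepAx F' z ξ h₀' hξ' π
    exact hmin P' F' hp hM'
end
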